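/- Let q:(0,1)→(0,∞) be non-decreasing on (0,δ] for some δ∈(0,1/2). If there exists c>0 such that I(q,c) = ∫₀¹ (t(1−t))⁻¹ exp(−c·q(t)²/(t(1−t))) dt < ∞, then q(t)/√t → +∞ as t → 0⁺. -/

import Mathlib

open MeasureTheory Set Filter Topology Real

/-! If `q t ≤ M √t` at some small `t`, then by monotonicity `q s ^ 2 ≤ M ^ 2 t` on `(t/2, t]`, where
`s (1 - s) ≥ t / 4`; so the integrand is at least `exp (-4 c M²) / s` there and its integral over
`(t/2, t]` is at least `exp (-4 c M²) log 2`. Integrability forces these integrals to vanish as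
`t → 0⁺`, so `q t / √t ≥ M` eventually. -/

theorem tendsto_setIntegral_Ioc_half_nhdsGT_zero {E : Type*} [NormedAddCommGroup E]
    [NormedSpace ℝ E] {f : ℝ → E} {b : ℝ} (hb : 0 < b) (hf : IntegrableOn f (Ioo 0 b)) :
    Tendsto (fun t => ∫ x in Ioc (t / 2) t, f x) (𝓝[>] 0) (𝓝 0) := by
  have hvol : Tendsto (fun t => volume (Ioc (t / 2) t)) (𝓝[>] (0:ℝ)) (𝓝 0) := by
    simp only [Real.volume_Ioc]
    rw [← ENNReal.ofReal_zero]
    refine ENNReal.tendsto_ofReal (tendsto_nhdsWithin_of_tendsto_nhds ?_)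
    exact Continuous.tendsto' (by fun_prop) 0 0 (by norm_num)
  refine (hf.tendsto_setIntegral_nhds_zero
    (tendsto_of_tendsto_of_tendsto_of_le_of_le tendsto_const_nhds hvol (fun _ => zero_le)
      fun t => Measure.restrict_apply_le _ _)).congr' ?_
  filter_upwards [Ioo_mem_nhdsGT hb] with t ht
  rw [Measure.restrict_restrict measurableSet_Ioc, inter_eq_left.2]
  exact fun x hx => ⟨by linarith [hx.1, ht.1], by linarith [hx.2, ht.2]⟩

theorem integral_inv_Ioc_half {t : ℝ} (ht : 0 < t) : ∫ s in Ioc (t / 2) t, s⁻¹ = log 2 := by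
  rw [← intervalIntegral.integral_of_le (by linarith), integral_inv_of_pos (by positivity) ht]
  congr 1
  field_simp

noncomputable def weightIntegrand (c : ℝ) (q : ℝ → ℝ) (t : ℝ) : ℝ :=
  (t * (1 - t))⁻¹ * exp (-(c * (q t) ^ 2) / (t * (1 - t)))

theorem exp_mul_inv_le_weightIntegrand {c K s t : ℝ} {q : ℝ → ℝ} (hc : 0 ≤ c)
    (hs : s ∈ Ioc (t / 2) t) (ht : t ≤ 1 / 2) (hq : q s ^ 2 ≤ K * t) :
    exp (-(4 * c * K)) * s⁻¹ ≤ weightIntegrand c q s := by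
  obtain ⟨hs₁, hs₂⟩ := hs
  have hs₀ : 0 < s := by linarith
  have hprod : 0 < s * (1 - s) := by nlinarith
  -- `s > t / 2` and `1 - s ≥ 1 / 2`
  have hprod_ge : t / 4 ≤ s * (1 - s) := by nlinarith
  have hexp : exp (-(4 * c * K)) ≤ exp (-(c * q s ^ 2) / (s * (1 - s))) := by
    rw [exp_le_exp, le_div_iff₀ hprod]
    nlinarith [mul_le_mul_of_nonneg_left hq hc, sq_nonneg (q s),
      mul_le_mul_of_nonneg_left hprod_ge (mul_nonneg hc (sq_nonneg (q s)))]
  have hinv : s⁻¹ ≤ (s * (1 - s))⁻¹ := inv_anti₀ hprod (by nlinarith)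
  rw [weightIntegrand, mul_comm]
  exact mul_le_mul hinv hexp (exp_pos _).le (inv_nonneg.2 hprod.le)

theorem exp_mul_log_two_le_setIntegral_weightIntegrand {c K t : ℝ} {q : ℝ → ℝ} (hc : 0 ≤ c)
    (ht₀ : 0 < t) (ht : t ≤ 1 / 2) (hq : ∀ s ∈ Ioc (t / 2) t, q s ^ 2 ≤ K * t)
    (hint : IntegrableOn (weightIntegrand c q) (Ioc (t / 2) t)) :
    exp (-(4 * c * K)) * log 2 ≤ ∫ s in Ioc (t / 2) t, weightIntegrand c q s := by
  have hint_inv : IntegrableOn (fun s => exp (-(4 * c * K)) * s⁻¹) (Ioc (t / 2) t) :=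
    ((continuousOn_inv₀.mono fun s hs => (by linarith [hs.1] : (0:ℝ) < s).ne').integrableOn_Icc
      |>.mono_set Ioc_subset_Icc_self).const_mul _
  calc exp (-(4 * c * K)) * log 2 = ∫ s in Ioc (t / 2) t, exp (-(4 * c * K)) * s⁻¹ := by
        rw [integral_const_mul, integral_inv_Ioc_half ht₀]
    _ ≤ ∫ s in Ioc (t / 2) t, weightIntegrand c q s :=
        setIntegral_mono_on hint_inv hint measurableSet_Ioc fun s hs =>
          exp_mul_inv_le_weightIntegrand hc hs ht (hq s hs)

/-- If the weight function `q : (0,1) → (0,∞)` is non-decreasing on `(0,δ]` for some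
`δ ∈ (0,1/2)` and `I(q,c) < ∞` for some `c > 0`, then `q(t)/√t → +∞` as `t → 0⁺`. -/
theorem weight_function_tendsto_atTop (q : ℝ → ℝ)
    (hq_pos : ∀ t ∈ Ioo (0:ℝ) 1, 0 < q t)
    (hmono : ∃ δ ∈ Ioo (0:ℝ) (1/2), MonotoneOn q (Ioc 0 δ))
    (hI : ∃ c > 0, IntegrableOn
      (fun t => (t * (1 - t))⁻¹ * Real.exp (-(c * (q t)^2) / (t * (1 - t))))
      (Ioo (0:ℝ) 1) volume) :
    Tendsto (fun t => q t / Real.sqrt t) (nhdsWithin 0 (Ioi 0)) atTop := by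
  obtain ⟨δ, ⟨hδ₀, hδ⟩, hmono⟩ := hmono
  obtain ⟨c, hc, hI⟩ := hI
  refine tendsto_atTop.2 fun M => ?_
  have hε : 0 < exp (-(4 * c * M ^ 2)) * log 2 := by positivity
  filter_upwards [Ioc_mem_nhdsGT hδ₀,
    (tendsto_setIntegral_Ioc_half_nhdsGT_zero one_pos hI).eventually (gt_mem_nhds hε)]
    with t ⟨ht₀, htδ⟩ hsmall
  by_contra! hlt
  have hqt : q t ^ 2 ≤ M ^ 2 * t := by
    have hqt_pos := hq_pos t ⟨ht₀, by linarith⟩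
    rw [div_lt_iff₀ (sqrt_pos.2 ht₀)] at hlt
    calc q t ^ 2 ≤ (M * √t) ^ 2 := pow_le_pow_left₀ hqt_pos.le hlt.le 2
      _ = M ^ 2 * t := by rw [mul_pow, sq_sqrt ht₀.le]
  have hq : ∀ s ∈ Ioc (t / 2) t, q s ^ 2 ≤ M ^ 2 * t := fun s ⟨hs₁, hs₂⟩ =>
    (pow_le_pow_left₀ (hq_pos s ⟨by linarith, by linarith⟩).le
      (hmono ⟨by linarith, by linarith⟩ ⟨ht₀, htδ⟩ hs₂) 2).trans hqt
  have hint : IntegrableOn (weightIntegrand c q) (Ioc (t / 2) t) :=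
    hI.mono_set fun s hs => ⟨by linarith [hs.1], by linarith [hs.2]⟩
  exact (exp_mul_log_two_le_setIntegral_weightIntegrand hc.le ht₀ (by linarith) hq hint).not_gt
    hsmall
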